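/- arXiv:1309.5570 — 4 statements merged into one kernel-verified Lean document; each statement's English description precedes it below -/
import Mathlib

section
/- Let R be a unital ring, n ≥ 2, and M a 2-torsion free unital Mₙ(R)-bimodule. If D : Mₙ(R) → M is an additive map such that for all A, B ∈ Mₙ(R) with AB = BA = 0 one has D(A)B + A D(B) + D(B)A + B D(A) = 0, then there exists a derivation δ : Mₙ(R) → M such that D(A) = δ(A) + A·D(1) for all A, and D(1) lies in the centre of M (i.e., D(1) commutes with every element of Mₙ(R) acting on M: A·D(1) = D(1)·A for all A ∈ Mₙ(R)). -/
/-!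
Let `c = D 1`. Sandwiching the identity for the orthogonal pair `(P, 1 - P)` between `P` and
`1 - P` (in both orders) gives `P c = P c P = c P` for every idempotent `P`; since `Mₙ(R)`,
`n ≥ 2`, is generated as a ring by its idempotents, `c` is central. Then `Δ = D - (· c)`
satisfies the same identity and `Δ 1 = 0`, and after subtracting an inner derivation also
`Δ e_pp = 0` for the diagonal matrix units. Two-torsion freeness then puts `Δ (a e_ij)` into the
Peirce corner `e_ii M e_jj`, and the identity for a few orthogonal pairs built from matrix units
gives the Leibniz rule for some products of matrix units. The cocycle identity
`T(xy, z) + T(x, y) z = T(x, yz) + x T(y, z)` for `T(x, y) = Δ(xy) - Δ(x) y - x Δ(y)` propagates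
it to all products `(a e_ij) (b e_kl)`, and additivity to all matrices.
-/

/-- A (not necessarily unital) bimodule structure of a ring `A` on an
additive group `M`, given by a left action `l` and a right action `r`. -/
structure RingBimod (A M : Type*) [Ring A] [AddCommGroup M] where
  l : A → M → M
  r : M → A → M
  l_add : ∀ a m₁ m₂, l a (m₁ + m₂) = l a m₁ + l a m₂
  add_l : ∀ a₁ a₂ m, l (a₁ + a₂) m = l a₁ m + l a₂ m
  r_add : ∀ m₁ m₂ a, r (m₁ + m₂) a = r m₁ a + r m₂ a
  add_r : ∀ m a₁ a₂, r m (a₁ + a₂) = r m a₁ + r m a₂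
  mul_l : ∀ a₁ a₂ m, l (a₁ * a₂) m = l a₁ (l a₂ m)
  r_mul : ∀ m a₁ a₂, r m (a₁ * a₂) = r (r m a₁) a₂
  l_r : ∀ a₁ m a₂, l a₁ (r m a₂) = r (l a₁ m) a₂

lemma eq_of_add_self_eq_add_self {M : Type*} [AddCommGroup M] (htf : ∀ m : M, m + m = 0 → m = 0)
    {a b : M} (h : a + a = b + b) : a = b :=
  sub_eq_zero.mp (htf _ (by rw [← sub_eq_zero.mpr h]; abel))

namespace Matrix

variable {n R : Type*} [Fintype n] [DecidableEq n] [Ring R]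

lemma completeOrthogonalIdempotents_single_one :
    CompleteOrthogonalIdempotents (fun p : n => single p p (1 : R)) where
  idem p := by simp [IsIdempotentElem]
  ortho p q hpq := single_mul_single_of_ne _ _ _ _ hpq _
  complete := sum_single_one

lemma isIdempotentElem_single_one (i : n) : IsIdempotentElem (single i i (1 : R)) :=
  completeOrthogonalIdempotents_single_one.idem i

lemma nonUnitalSubring_closure_isIdempotentElem [Nontrivial n] :
    NonUnitalSubring.closure {P : Matrix n n R | IsIdempotentElem P} = ⊤ := by
  set S := NonUnitalSubring.closure {P : Matrix n n R | IsIdempotentElem P}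
  have hidem {P : Matrix n n R} (hP : IsIdempotentElem P) : P ∈ S :=
    NonUnitalSubring.subset_closure hP
  -- `a e_ij = (e_ii + a e_ij) - e_ii` off the diagonal, and `a e_ii = (a e_ij) e_ji` on it
  have hoff {i j : n} (hij : i ≠ j) (a : R) : single i j a ∈ S := by
    have hsum : IsIdempotentElem (single i i 1 + single i j a) := by
      simp [IsIdempotentElem, add_mul, mul_add, single_mul_single_of_ne _ _ _ _ hij.symm]
    have hdiag : IsIdempotentElem (single i i (1 : R)) := isIdempotentElem_single_one i
    simpa using S.sub_mem (hidem hsum) (hidem hdiag)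
  have hsingle (i j : n) (a : R) : single i j a ∈ S := by
    rcases eq_or_ne i j with rfl | hij
    · obtain ⟨q, hq⟩ := exists_ne i
      simpa using S.mul_mem (hoff hq.symm a) (hoff hq (1 : R))
    · exact hoff hij a
  refine eq_top_iff.mpr fun A _ => ?_
  rw [matrix_eq_sum_single A]
  exact S.sum_mem fun i _ => S.sum_mem fun j _ => hsingle i j _

end Matrix

namespace RingBimod

section Ring

variable {A M : Type*} [Ring A] [AddCommGroup M] (bm : RingBimod A M)

def actL (m : M) : A →+ M := AddMonoidHom.mk' (bm.l · m) (bm.add_l · · m)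

def actR (m : M) : A →+ M := AddMonoidHom.mk' (bm.r m) (bm.add_r m)

def lEnd (a : A) : M →+ M := AddMonoidHom.mk' (bm.l a) (bm.l_add a)

def rEnd (a : A) : M →+ M := AddMonoidHom.mk' (bm.r · a) (bm.r_add · · a)

@[simp] lemma actL_apply (m : M) (a : A) : bm.actL m a = bm.l a m := rfl

lemma l_zero (a : A) : bm.l a 0 = 0 := (bm.lEnd a).map_zero
lemma zero_l (m : M) : bm.l 0 m = 0 := (bm.actL m).map_zero
lemma r_zero (m : M) : bm.r m 0 = 0 := (bm.actR m).map_zero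
lemma zero_r (a : A) : bm.r 0 a = 0 := (bm.rEnd a).map_zero
lemma l_neg (a : A) (m : M) : bm.l a (-m) = -bm.l a m := (bm.lEnd a).map_neg m
lemma neg_l (a : A) (m : M) : bm.l (-a) m = -bm.l a m := (bm.actL m).map_neg a
lemma r_neg (a : A) (m : M) : bm.r (-m) a = -bm.r m a := (bm.rEnd a).map_neg m
lemma neg_r (a : A) (m : M) : bm.r m (-a) = -bm.r m a := (bm.actR m).map_neg a
lemma l_sub (a : A) (m₁ m₂ : M) : bm.l a (m₁ - m₂) = bm.l a m₁ - bm.l a m₂ :=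
  (bm.lEnd a).map_sub m₁ m₂
lemma sub_l (a₁ a₂ : A) (m : M) : bm.l (a₁ - a₂) m = bm.l a₁ m - bm.l a₂ m :=
  (bm.actL m).map_sub a₁ a₂
lemma r_sub (a : A) (m₁ m₂ : M) : bm.r (m₁ - m₂) a = bm.r m₁ a - bm.r m₂ a :=
  (bm.rEnd a).map_sub m₁ m₂
lemma sub_r (a₁ a₂ : A) (m : M) : bm.r m (a₁ - a₂) = bm.r m a₁ - bm.r m a₂ :=
  (bm.actR m).map_sub a₁ a₂

lemma sum_l {ι : Type*} (s : Finset ι) (f : ι → A) (m : M) :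
    bm.l (∑ i ∈ s, f i) m = ∑ i ∈ s, bm.l (f i) m := map_sum (bm.actL m) f s
lemma sum_r {ι : Type*} (s : Finset ι) (m : M) (f : ι → A) :
    bm.r m (∑ i ∈ s, f i) = ∑ i ∈ s, bm.r m (f i) := map_sum (bm.actR m) f s
lemma l_sum {ι : Type*} (s : Finset ι) (a : A) (f : ι → M) :
    bm.l a (∑ i ∈ s, f i) = ∑ i ∈ s, bm.l a (f i) := map_sum (bm.lEnd a) f s
lemma r_sum {ι : Type*} (s : Finset ι) (f : ι → M) (a : A) :
    bm.r (∑ i ∈ s, f i) a = ∑ i ∈ s, bm.r (f i) a := map_sum (bm.rEnd a) f s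

def centralizer (m : M) : NonUnitalSubring A where
  carrier := {a | bm.l a m = bm.r m a}
  zero_mem' := by simp only [Set.mem_ofPred_eq, zero_l, r_zero]
  add_mem' {a b} ha hb := by simp_all only [Set.mem_ofPred_eq, bm.add_l, bm.add_r]
  neg_mem' {a} ha := by simp_all only [Set.mem_ofPred_eq, neg_l, neg_r]
  mul_mem' {a b} ha hb := by
    simp_all only [Set.mem_ofPred_eq, bm.mul_l, bm.l_r, bm.r_mul]

def innerDerivation (m : M) : A →+ M := bm.actL m - bm.actR m

@[simp] lemma innerDerivation_apply (m : M) (a : A) :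
    bm.innerDerivation m a = bm.l a m - bm.r m a := rfl

def LeibnizAt (D : A →+ M) (a b : A) : Prop := D (a * b) = bm.r (D a) b + bm.l a (D b)

def IsDerivation (D : A →+ M) : Prop := ∀ a b, bm.LeibnizAt D a b

def JordanDerivableAtOrthogonal (D : A →+ M) : Prop :=
  ∀ a b, a * b = 0 → b * a = 0 → bm.r (D a) b + bm.l a (D b) + bm.r (D b) a + bm.l b (D a) = 0

variable {bm}

lemma leibnizAt_mul_left_iff {D : A →+ M} {a b c : A} (hab : bm.LeibnizAt D a b)
    (hbc : bm.LeibnizAt D b c) : bm.LeibnizAt D (a * b) c ↔ bm.LeibnizAt D a (b * c) := by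
  unfold LeibnizAt at *
  rw [hab, hbc, mul_assoc, bm.r_add, bm.l_add, ← bm.r_mul, ← bm.mul_l, ← bm.l_r, add_assoc]

lemma isDerivation_innerDerivation (m : M) : bm.IsDerivation (bm.innerDerivation m) := by
  intro a b
  simp only [LeibnizAt, innerDerivation_apply, r_sub, l_sub, bm.mul_l, ← bm.r_mul, bm.l_r]
  abel

lemma IsDerivation.add {δ δ' : A →+ M} (hδ : bm.IsDerivation δ) (hδ' : bm.IsDerivation δ') :
    bm.IsDerivation (δ + δ') := by
  intro a b
  have h := hδ a b
  have h' := hδ' a b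
  simp only [LeibnizAt, AddMonoidHom.add_apply, bm.r_add, bm.l_add] at h h' ⊢
  rw [h, h']
  abel

lemma IsDerivation.jordanDerivableAtOrthogonal {δ : A →+ M} (hδ : bm.IsDerivation δ) :
    bm.JordanDerivableAtOrthogonal δ := by
  intro a b hab hba
  rw [add_assoc (_ + _), ← hδ a b, ← hδ b a, hab, hba, map_zero, add_zero]

lemma JordanDerivableAtOrthogonal.sub {D D' : A →+ M} (hD : bm.JordanDerivableAtOrthogonal D)
    (hD' : bm.JordanDerivableAtOrthogonal D') : bm.JordanDerivableAtOrthogonal (D - D') := by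
  intro a b hab hba
  have h := congrArg₂ (· - ·) (hD a b hab hba) (hD' a b hab hba)
  simp only [AddMonoidHom.sub_apply, r_sub, l_sub, sub_zero] at h ⊢
  rw [← h]
  abel

lemma jordanDerivableAtOrthogonal_actL {c : M} (hc : ∀ a, bm.l a c = bm.r c a) :
    bm.JordanDerivableAtOrthogonal (bm.actL c) := by
  intro a b hab hba
  simp only [actL_apply, ← bm.l_r, ← hc, ← bm.mul_l, hab, hba, zero_l, add_zero]

lemma commute_map_one_of_isIdempotentElem (hunit : ∀ m : M, bm.l 1 m = m ∧ bm.r m 1 = m)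
    {D : A →+ M} (hD : bm.JordanDerivableAtOrthogonal D) {P : A} (hP : IsIdempotentElem P) :
    bm.l P (D 1) = bm.r (D 1) P := by
  have h1 : P * (1 - P) = 0 := by rw [mul_sub, mul_one, hP.eq, sub_self]
  have h2 : (1 - P) * P = 0 := by rw [sub_mul, one_mul, hP.eq, sub_self]
  have hJ := hD P (1 - P) h1 h2
  rw [map_sub] at hJ
  have e1 := congrArg (fun x => bm.l P (bm.r x (1 - P))) hJ
  have e2 := congrArg (fun x => bm.r (bm.l (1 - P) x) P) hJ
  simp only [bm.r_add, r_sub, ← bm.l_r, ← bm.r_mul, ← bm.mul_l, bm.l_add, l_sub, sub_mul,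
    one_mul, hP.eq, sub_self, zero_r, l_zero, zero_l, sub_r, sub_l, (hunit _).1, (hunit _).2]
    at e1 e2
  have f1 : bm.l P (D 1) - bm.l P (bm.r (D 1) P) = 0 := by rw [← e1]; abel
  have f2 : bm.r (D 1) P - bm.l P (bm.r (D 1) P) = 0 := by rw [← e2]; abel
  exact (sub_eq_zero.mp f1).trans (sub_eq_zero.mp f2).symm

variable {D : A →+ M}

lemma map_eq_of_isIdempotentElem (hunit : ∀ m : M, bm.l 1 m = m ∧ bm.r m 1 = m)
    (htf : ∀ m : M, m + m = 0 → m = 0) (hD : bm.JordanDerivableAtOrthogonal D) (hD1 : D 1 = 0)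
    {P : A} (hP : IsIdempotentElem P) : D P = bm.r (D P) P + bm.l P (D P) := by
  have h1 : P * (1 - P) = 0 := by rw [mul_sub, mul_one, hP.eq, sub_self]
  have h2 : (1 - P) * P = 0 := by rw [sub_mul, one_mul, hP.eq, sub_self]
  have hJ := hD P (1 - P) h1 h2
  simp only [map_sub, hD1, zero_sub, sub_r, sub_l, (hunit _).1, (hunit _).2, l_neg, r_neg]
    at hJ
  refine eq_of_add_self_eq_add_self htf (sub_eq_zero.mp ?_)
  rw [← hJ]
  abel

lemma l_r_map_eq_zero_of_isIdempotentElem (hunit : ∀ m : M, bm.l 1 m = m ∧ bm.r m 1 = m)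
    (htf : ∀ m : M, m + m = 0 → m = 0) (hD : bm.JordanDerivableAtOrthogonal D) (hD1 : D 1 = 0)
    {P : A} (hP : IsIdempotentElem P) : bm.l P (bm.r (D P) P) = 0 := by
  have e := congrArg (fun x => bm.l P (bm.r x P)) (map_eq_of_isIdempotentElem hunit htf hD hD1 hP)
  simp only [bm.r_add, bm.l_add, ← bm.l_r, ← bm.r_mul, ← bm.mul_l, hP.eq] at e
  exact left_eq_add.mp e

lemma l_r_map_eq_neg_of_orthogonal (hD : bm.JordanDerivableAtOrthogonal D) {P Q : A}
    (hP : IsIdempotentElem P) (hQ : IsIdempotentElem Q) (hPQ : P * Q = 0) (hQP : Q * P = 0) :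
    bm.l P (bm.r (D Q) Q) = -bm.l P (bm.r (D P) Q) := by
  have e := congrArg (fun x => bm.l P (bm.r x Q)) (hD P Q hPQ hQP)
  simp only [bm.r_add, bm.l_add, ← bm.l_r, ← bm.r_mul, ← bm.mul_l, hP.eq, hQ.eq, hPQ, r_zero,
    zero_r, l_zero, zero_l] at e
  exact eq_neg_of_add_eq_zero_left (by rw [← e]; abel)

lemma exists_map_eq_innerDerivation_of_completeOrthogonalIdempotents
    (hunit : ∀ m : M, bm.l 1 m = m ∧ bm.r m 1 = m) (htf : ∀ m : M, m + m = 0 → m = 0)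
    (hD : bm.JordanDerivableAtOrthogonal D) (hD1 : D 1 = 0) {ι : Type*} [Fintype ι]
    [DecidableEq ι] {e : ι → A} (he : CompleteOrthogonalIdempotents e) :
    ∃ m : M, ∀ p, D (e p) = bm.innerDerivation m (e p) := by
  refine ⟨-∑ q, bm.r (D (e q)) (e q), fun p => ?_⟩
  have hvanish := l_r_map_eq_zero_of_isIdempotentElem hunit htf hD hD1 (he.idem p)
  have hr : bm.r (-∑ q, bm.r (D (e q)) (e q)) (e p) = -bm.r (D (e p)) (e p) := by
    rw [r_neg, r_sum, Finset.sum_eq_single p]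
    · rw [← bm.r_mul, (he.idem p).eq]
    · intro q _ hq
      rw [← bm.r_mul, he.ortho hq, r_zero]
    · simp
  have hl : bm.l (e p) (-∑ q, bm.r (D (e q)) (e q)) = bm.l (e p) (D (e p)) := by
    rw [l_neg, l_sum, ← Finset.add_sum_erase _ _ (Finset.mem_univ p), hvanish, zero_add,
      Finset.sum_congr rfl fun q hq => l_r_map_eq_neg_of_orthogonal hD (he.idem p) (he.idem q)
        (he.ortho (Finset.ne_of_mem_erase hq).symm) (he.ortho (Finset.ne_of_mem_erase hq)),
      Finset.sum_neg_distrib, neg_neg, ← l_sum, ← sum_r, Finset.sum_erase_eq_sub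
        (Finset.mem_univ p), he.complete, sub_r, (hunit _).2, l_sub, hvanish, sub_zero]
  rw [innerDerivation_apply, hl, hr, sub_neg_eq_add, add_comm]
  exact map_eq_of_isIdempotentElem hunit htf hD hD1 (he.idem p)

lemma l_map_eq_zero_and_r_map_eq_zero (htf : ∀ m : M, m + m = 0 → m = 0)
    (hD : bm.JordanDerivableAtOrthogonal D) {P a : A} (hP : IsIdempotentElem P) (hDP : D P = 0)
    (hPa : P * a = 0) (haP : a * P = 0) : bm.l P (D a) = 0 ∧ bm.r (D a) P = 0 := by
  have hJ := hD _ _ hPa haP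
  simp only [hDP, zero_r, l_zero, zero_add, add_zero] at hJ
  have e1 := congrArg (bm.l P) hJ
  simp only [bm.l_add, ← bm.mul_l, bm.l_r, hP.eq, l_zero] at e1
  have e2 := congrArg (bm.r · P) e1
  simp only [bm.r_add, ← bm.r_mul, hP.eq, zero_r] at e2
  rw [htf _ e2, add_zero] at e1
  rw [e1, zero_add] at hJ
  exact ⟨e1, hJ⟩

variable {ι : Type*} [Fintype ι] {e : ι → A}

lemma l_eq_self_of_forall_ne (hl : ∀ m : M, bm.l 1 m = m) (he : ∑ p, e p = 1) {m : M} {i : ι}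
    (h : ∀ p ≠ i, bm.l (e p) m = 0) : bm.l (e i) m = m := by
  conv_rhs => rw [← hl m, ← he, sum_l, Finset.sum_eq_single i (fun p _ hp => h p hp) (by simp)]

lemma r_eq_self_of_forall_ne (hr : ∀ m : M, bm.r m 1 = m) (he : ∑ p, e p = 1) {m : M} {i : ι}
    (h : ∀ p ≠ i, bm.r m (e p) = 0) : bm.r m (e i) = m := by
  conv_rhs => rw [← hr m, ← he, sum_r, Finset.sum_eq_single i (fun p _ hp => h p hp) (by simp)]

lemma l_eq_zero_of_forall_l_r (hr : ∀ m : M, bm.r m 1 = m) (he : ∑ p, e p = 1) {a : A} {m : M}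
    (h : ∀ q, bm.l a (bm.r m (e q)) = 0) : bm.l a m = 0 := by
  rw [← hr m, ← he, sum_r, l_sum]
  exact Finset.sum_eq_zero fun q _ => h q

lemma r_eq_zero_of_forall_l_r (hl : ∀ m : M, bm.l 1 m = m) (he : ∑ p, e p = 1) {a : A} {m : M}
    (h : ∀ p, bm.l (e p) (bm.r m a) = 0) : bm.r m a = 0 := by
  rw [← hl (bm.r m a), ← he, sum_l]
  exact Finset.sum_eq_zero fun p _ => h p

end Ring

section Matrix

open Matrix

variable {n R M : Type*} [Fintype n] [DecidableEq n] [Ring R] [AddCommGroup M]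
  {bm : RingBimod (Matrix n n R) M} {D : Matrix n n R →+ M}

lemma commute_map_one [Nontrivial n] (hunit : ∀ m : M, bm.l 1 m = m ∧ bm.r m 1 = m)
    (hD : bm.JordanDerivableAtOrthogonal D) (A : Matrix n n R) :
    bm.l A (D 1) = bm.r (D 1) A := by
  have hle : NonUnitalSubring.closure {P : Matrix n n R | IsIdempotentElem P} ≤
      bm.centralizer (D 1) :=
    NonUnitalSubring.closure_le.mpr fun _ hP => commute_map_one_of_isIdempotentElem hunit hD hP
  rw [Matrix.nonUnitalSubring_closure_isIdempotentElem] at hle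
  exact hle (NonUnitalSubring.mem_top A)

lemma map_one_eq_zero_of_map_single_diag (hdiag : ∀ p, D (single p p (1 : R)) = 0) : D 1 = 0 := by
  rw [← sum_single_one, map_sum]
  exact Finset.sum_eq_zero fun p _ => hdiag p

lemma l_map_single_eq_zero_and_r_map_single_eq_zero (htf : ∀ m : M, m + m = 0 → m = 0)
    (hD : bm.JordanDerivableAtOrthogonal D) (hdiag : ∀ p, D (single p p (1 : R)) = 0)
    {i j p : n} (hpi : p ≠ i) (hpj : p ≠ j) (a : R) :
    bm.l (single p p 1) (D (single i j a)) = 0 ∧ bm.r (D (single i j a)) (single p p 1) = 0 :=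
  l_map_eq_zero_and_r_map_eq_zero htf hD (Matrix.isIdempotentElem_single_one p) (hdiag p)
    (single_mul_single_of_ne _ _ _ _ hpi _) (single_mul_single_of_ne _ _ _ _ hpj.symm _)

variable {i j : n}

lemma r_l_map_single_single_one_eq_zero (htf : ∀ m : M, m + m = 0 → m = 0)
    (hD : bm.JordanDerivableAtOrthogonal D) (hij : i ≠ j) (a : R) :
    bm.r (bm.l (single j j 1) (D (single i j a))) (single i j 1) = 0 := by
  have hsq (b c : R) : single i j b * single i j c = 0 := single_mul_single_of_ne _ _ _ _ hij.symm _
  -- `e_jj` kills `e_ij` from the left, so only two of the four terms of the identity survive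
  have hpair (b : R) : bm.r (bm.l (single j j 1) (D (single i j b))) (single i j 1) +
      bm.r (bm.l (single j j 1) (D (single i j 1))) (single i j b) = 0 := by
    have e := congrArg (bm.l (single j j 1)) (hD _ _ (hsq b 1) (hsq 1 b))
    simp only [bm.l_add, ← bm.mul_l, bm.l_r, single_mul_single_of_ne _ _ _ _ hij.symm, zero_l,
      l_zero] at e
    rw [← e]
    abel
  have hone := htf _ (hpair 1)
  have hsplit : single i j a = single i j (1 : R) * single j j a := by simp
  rw [← hpair a, hsplit, bm.r_mul, hone, zero_r, add_zero]

lemma l_r_map_single_swap_eq_zero (htf : ∀ m : M, m + m = 0 → m = 0)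
    (hD : bm.JordanDerivableAtOrthogonal D) (hij : i ≠ j) (a : R) :
    bm.l (single j j 1) (bm.r (D (single i j a)) (single i i 1)) = 0 := by
  rw [show single i i (1 : R) = single i j 1 * single j i 1 by simp, bm.r_mul, bm.l_r, bm.l_r,
    r_l_map_single_single_one_eq_zero htf hD hij a, zero_r]

lemma map_single_eq_of_ne (hunit : ∀ m : M, bm.l 1 m = m ∧ bm.r m 1 = m)
    (htf : ∀ m : M, m + m = 0 → m = 0) (hD : bm.JordanDerivableAtOrthogonal D)
    (hdiag : ∀ p, D (single p p (1 : R)) = 0) (hij : i ≠ j) (a : R) :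
    D (single i j a) = bm.r (D (single i j a)) (single i i 1)
      + bm.r (D (single i j a)) (single i j a) + bm.l (single i i 1) (D (single i j a))
      + bm.l (single i j a) (D (single i j a)) := by
  have hidem : IsIdempotentElem (single i i 1 + single i j a) := by
    simp [IsIdempotentElem, add_mul, mul_add, single_mul_single_of_ne _ _ _ _ hij.symm]
  have h := map_eq_of_isIdempotentElem hunit htf hD (map_one_eq_zero_of_map_single_diag hdiag)
    hidem
  simp only [map_add, hdiag, zero_add, bm.add_r, bm.add_l] at h
  exact h.trans (by abel)

lemma l_r_map_single_right_eq_zero (hunit : ∀ m : M, bm.l 1 m = m ∧ bm.r m 1 = m)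
    (htf : ∀ m : M, m + m = 0 → m = 0) (hD : bm.JordanDerivableAtOrthogonal D)
    (hdiag : ∀ p, D (single p p (1 : R)) = 0) (hij : i ≠ j) (a : R) :
    bm.l (single j j 1) (bm.r (D (single i j a)) (single j j 1)) = 0 := by
  have key : bm.l (single j j 1) (bm.r (D (single i j a)) (single i j a)) = 0 := by
    nth_rewrite 2 [show single i j a = single i j (1 : R) * single j j a by simp]
    rw [bm.r_mul, bm.l_r, bm.l_r, r_l_map_single_single_one_eq_zero htf hD hij a, zero_r]
  have e := congrArg (fun x => bm.l (single j j 1) (bm.r x (single j j 1)))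
    (map_single_eq_of_ne hunit htf hD hdiag hij a)
  simp only [bm.r_add, bm.l_add, ← bm.l_r, ← bm.r_mul, ← bm.mul_l, single_mul_single_same,
    mul_one, single_mul_single_of_ne _ _ _ _ hij, single_mul_single_of_ne _ _ _ _ hij.symm,
    zero_l, r_zero, zero_add, add_zero] at e
  exact e.trans key

lemma l_r_map_single_left_eq_zero (hunit : ∀ m : M, bm.l 1 m = m ∧ bm.r m 1 = m)
    (htf : ∀ m : M, m + m = 0 → m = 0) (hD : bm.JordanDerivableAtOrthogonal D)
    (hdiag : ∀ p, D (single p p (1 : R)) = 0) (hij : i ≠ j) (a : R) :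
    bm.l (single i i 1) (bm.r (D (single i j a)) (single i i 1)) = 0 := by
  have key : bm.l (single i j a) (bm.r (D (single i j a)) (single i i 1)) = 0 := by
    nth_rewrite 1 [show single i j a = single i j a * single j j (1 : R) by simp]
    rw [bm.mul_l, l_r_map_single_swap_eq_zero htf hD hij a, l_zero]
  have e := congrArg (fun x => bm.l (single i i 1) (bm.r x (single i i 1)))
    (map_single_eq_of_ne hunit htf hD hdiag hij a)
  simp only [bm.r_add, bm.l_add, ← bm.l_r, ← bm.r_mul, ← bm.mul_l, single_mul_single_same,
    mul_one, one_mul, single_mul_single_of_ne _ _ _ _ hij.symm, r_zero, add_zero] at e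
  rw [key, add_zero] at e
  exact left_eq_add.mp e

variable (bm D) in
def MapsSingleToCorner : Prop :=
  ∀ i j (a : R), bm.l (single i i 1) (D (single i j a)) = D (single i j a) ∧
    bm.r (D (single i j a)) (single j j 1) = D (single i j a)

lemma mapsSingleToCorner (hunit : ∀ m : M, bm.l 1 m = m ∧ bm.r m 1 = m)
    (htf : ∀ m : M, m + m = 0 → m = 0) (hD : bm.JordanDerivableAtOrthogonal D)
    (hdiag : ∀ p, D (single p p (1 : R)) = 0) : bm.MapsSingleToCorner D := by
  have hl (m : M) : bm.l 1 m = m := (hunit m).1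
  have hr (m : M) : bm.r m 1 = m := (hunit m).2
  have hout {i j p : n} (hpi : p ≠ i) (hpj : p ≠ j) (a : R) :=
    l_map_single_eq_zero_and_r_map_single_eq_zero htf hD hdiag hpi hpj a
  -- every Peirce component `e_pp (D x) e_qq` of `x = a e_ij` with `(p, q) ≠ (i, j)` vanishes
  intro i j a
  constructor
  · refine l_eq_self_of_forall_ne hl sum_single_one fun p hpi => ?_
    rcases eq_or_ne p j with rfl | hpj
    · refine l_eq_zero_of_forall_l_r hr sum_single_one fun q => ?_
      rcases eq_or_ne q i with rfl | hqi
      · exact l_r_map_single_swap_eq_zero htf hD hpi.symm a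
      rcases eq_or_ne q p with rfl | hqp
      · exact l_r_map_single_right_eq_zero hunit htf hD hdiag hpi.symm a
      · rw [(hout hqi hqp a).2, l_zero]
    · exact (hout hpi hpj a).1
  · refine r_eq_self_of_forall_ne hr sum_single_one fun q hqj => ?_
    rcases eq_or_ne q i with rfl | hqi
    · refine r_eq_zero_of_forall_l_r hl sum_single_one fun p => ?_
      rcases eq_or_ne p q with rfl | hpq
      · exact l_r_map_single_left_eq_zero hunit htf hD hdiag hqj a
      rcases eq_or_ne p j with rfl | hpj
      · exact l_r_map_single_swap_eq_zero htf hD hqj a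
      · rw [bm.l_r, (hout hpq hpj a).1, zero_r]
    · exact (hout hqi hqj a).2

namespace MapsSingleToCorner

lemma l_single (hC : bm.MapsSingleToCorner D) (i j : n) (a : R) :
    bm.l (single i i 1) (D (single i j a)) = D (single i j a) := (hC i j a).1

lemma r_single (hC : bm.MapsSingleToCorner D) (i j : n) (a : R) :
    bm.r (D (single i j a)) (single j j 1) = D (single i j a) := (hC i j a).2

lemma r_single_of_ne (hC : bm.MapsSingleToCorner D) {i j k : n} (a : R) (hjk : j ≠ k) (p : n)
    (b : R) : bm.r (D (single i j a)) (single k p b) = 0 := by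
  rw [← hC.r_single i j a, ← bm.r_mul, single_mul_single_of_ne _ _ _ _ hjk, r_zero]

lemma single_l_of_ne (hC : bm.MapsSingleToCorner D) {i j p : n} (a : R) (k : n) (hpi : p ≠ i)
    (b : R) : bm.l (single k p b) (D (single i j a)) = 0 := by
  rw [← hC.l_single i j a, ← bm.mul_l, single_mul_single_of_ne _ _ _ _ hpi, zero_l]

variable {k : n}

lemma leibnizAt_diag_single_one (hD : bm.JordanDerivableAtOrthogonal D)
    (hdiag : ∀ p, D (single p p (1 : R)) = 0) (hC : bm.MapsSingleToCorner D) (hjk : j ≠ k)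
    (z : R) : bm.LeibnizAt D (single j j z) (single j k 1) := by
  have hAB : (single j j z + single j k z) * (single j k 1 - single k k 1) = 0 := by
    simp [mul_sub, add_mul, hjk, hjk.symm]
  have hBA : (single j k (1 : R) - single k k 1) * (single j j z + single j k z) = 0 := by
    simp [sub_mul, mul_add, hjk.symm]
  have hJ := hD _ _ hAB hBA
  simp only [map_add, map_sub, hdiag, sub_zero, bm.l_add, bm.add_l, bm.r_add, bm.add_r, sub_l,
    sub_r, hC.single_l_of_ne, hC.r_single_of_ne, hC.r_single, hjk, hjk.symm, add_zero, ne_eq,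
    not_false_eq_true] at hJ
  rw [LeibnizAt, single_mul_single_same, mul_one]
  refine (eq_of_sub_eq_zero ?_).symm
  rw [← hJ]
  abel

lemma leibnizAt_single_one_diag (hD : bm.JordanDerivableAtOrthogonal D)
    (hdiag : ∀ p, D (single p p (1 : R)) = 0) (hC : bm.MapsSingleToCorner D) (hij : i ≠ j)
    (z : R) : bm.LeibnizAt D (single i j 1) (single j j z) := by
  have hAB : (single i i (1 : R) - single i j 1) * (single i j z + single j j z) = 0 := by
    simp [sub_mul, mul_add, hij, hij.symm]
  have hBA : (single i j z + single j j z) * (single i i (1 : R) - single i j 1) = 0 := by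
    simp [mul_sub, add_mul, hij.symm]
  have hJ := hD _ _ hAB hBA
  simp only [map_add, map_sub, hdiag, sub_zero, zero_sub, bm.l_add, bm.add_l, bm.r_add,
    bm.add_r, sub_l, sub_r, l_neg, r_neg, hC.single_l_of_ne, hC.r_single_of_ne, hC.l_single, hij,
    hij.symm, add_zero, zero_add, neg_zero, ne_eq, not_false_eq_true] at hJ
  rw [LeibnizAt, single_mul_single_same, one_mul]
  refine eq_of_sub_eq_zero ?_
  rw [← hJ]
  abel

lemma leibnizAt_single_one_swap (htf : ∀ m : M, m + m = 0 → m = 0)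
    (hD : bm.JordanDerivableAtOrthogonal D) (hdiag : ∀ p, D (single p p (1 : R)) = 0)
    (hC : bm.MapsSingleToCorner D) (hij : i ≠ j) :
    bm.LeibnizAt D (single i j 1) (single j i 1) := by
  set N : Matrix n n R := single i i 1 + single i j 1 - single j i 1 - single j j 1 with hN
  have hNN : N * N = 0 := by
    simp only [hN, add_mul, sub_mul, mul_add, mul_sub, single_mul_single_same, one_mul,
      single_mul_single_of_ne _ _ _ _ hij, single_mul_single_of_ne _ _ _ _ hij.symm]
    abel
  have hJ := hD N N hNN hNN
  have hX := htf _ (show (bm.r (D N) N + bm.l N (D N)) + (bm.r (D N) N + bm.l N (D N)) = 0 by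
    rw [← hJ]; abel)
  have hDN : D N = D (single i j 1) - D (single j i 1) := by
    rw [hN, map_sub, map_sub, map_add, hdiag, hdiag, zero_add, sub_zero]
  rw [hDN] at hX
  have e := congrArg (bm.l (single i i 1)) hX
  simp only [hN, bm.l_add, bm.add_l, bm.add_r, l_sub, sub_l, r_sub, sub_r, bm.l_r, ← bm.mul_l,
    single_mul_single_same, one_mul, single_mul_single_of_ne _ _ _ _ hij, hC.single_l_of_ne,
    hC.r_single_of_ne, hC.l_single, hC.r_single, hij, hij.symm, l_neg, l_zero, zero_l, zero_r,
    add_zero, zero_add, sub_zero, zero_sub, neg_zero, ne_eq, not_false_eq_true] at e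
  rw [LeibnizAt, single_mul_single_same, one_mul, hdiag, eq_comm]
  exact neg_eq_zero.mp (by rw [← e]; abel)

lemma leibnizAt_single_single_one (hD : bm.JordanDerivableAtOrthogonal D)
    (hdiag : ∀ p, D (single p p (1 : R)) = 0) (hC : bm.MapsSingleToCorner D) (hjk : j ≠ k)
    (hik : i ≠ k) (z : R) : bm.LeibnizAt D (single i j z) (single j k 1) := by
  have hAB : (single i j z - single i k z) * (single j k 1 + single k k 1) = 0 := by
    simp [sub_mul, mul_add, hjk, hjk.symm]
  have hBA : (single j k (1 : R) + single k k 1) * (single i j z - single i k z) = 0 := by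
    simp [add_mul, mul_sub, hik.symm]
  have hJ := hD _ _ hAB hBA
  simp only [map_add, map_sub, hdiag, sub_zero, bm.add_l, bm.add_r, l_sub, sub_l, r_sub, sub_r,
    hC.single_l_of_ne, hC.r_single_of_ne, hC.r_single, hjk, hjk.symm, hik.symm, add_zero,
    zero_sub, ne_eq, not_false_eq_true] at hJ
  rw [LeibnizAt, single_mul_single_same, mul_one]
  refine (eq_of_sub_eq_zero ?_).symm
  rw [← hJ]
  abel

lemma leibnizAt_single_diag (hD : bm.JordanDerivableAtOrthogonal D)
    (hdiag : ∀ p, D (single p p (1 : R)) = 0) (hC : bm.MapsSingleToCorner D) (hij : i ≠ j)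
    (z y : R) : bm.LeibnizAt D (single i j z) (single j j y) := by
  have hAB : (single i i (1 : R) + single i j z) * (single j j y - single i j (z * y)) = 0 := by
    simp [add_mul, mul_sub, hij, hij.symm]
  have hBA : (single j j y - single i j (z * y)) * (single i i (1 : R) + single i j z) = 0 := by
    simp [sub_mul, mul_add, hij.symm]
  have hJ := hD _ _ hAB hBA
  simp only [map_add, map_sub, hdiag, sub_zero, zero_add, bm.add_l, bm.add_r, l_sub, sub_l,
    r_sub, sub_r, hC.single_l_of_ne, hC.r_single_of_ne, hC.l_single, hij, hij.symm, add_zero,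
    zero_sub, ne_eq, not_false_eq_true] at hJ
  rw [LeibnizAt, single_mul_single_same]
  refine (eq_of_sub_eq_zero ?_).symm
  rw [← hJ]
  abel


lemma leibnizAt_single_single_one_swap (htf : ∀ m : M, m + m = 0 → m = 0)
    (hD : bm.JordanDerivableAtOrthogonal D) (hdiag : ∀ p, D (single p p (1 : R)) = 0)
    (hC : bm.MapsSingleToCorner D) (hij : i ≠ j) (z : R) :
    bm.LeibnizAt D (single i j z) (single j i 1) := by
  have h := (leibnizAt_mul_left_iff (hC.leibnizAt_diag_single_one hD hdiag hij z)
    (hC.leibnizAt_single_one_swap htf hD hdiag hij)).mpr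
  simp only [single_mul_single_same, mul_one] at h
  refine h ?_
  rw [LeibnizAt, single_mul_single_same, mul_one, hC.r_single, hdiag, l_zero, add_zero]

lemma leibnizAt_single_single_one_of_ne (htf : ∀ m : M, m + m = 0 → m = 0)
    (hD : bm.JordanDerivableAtOrthogonal D) (hdiag : ∀ p, D (single p p (1 : R)) = 0)
    (hC : bm.MapsSingleToCorner D) (hij : i ≠ j) (hjk : j ≠ k) (z : R) :
    bm.LeibnizAt D (single i j z) (single j k 1) := by
  rcases eq_or_ne i k with rfl | hik
  · exact hC.leibnizAt_single_single_one_swap htf hD hdiag hij z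
  · exact hC.leibnizAt_single_single_one hD hdiag hjk hik z

lemma leibnizAt_single_single_of_ne (htf : ∀ m : M, m + m = 0 → m = 0)
    (hD : bm.JordanDerivableAtOrthogonal D) (hdiag : ∀ p, D (single p p (1 : R)) = 0)
    (hC : bm.MapsSingleToCorner D) (hij : i ≠ j) (z y : R) :
    bm.LeibnizAt D (single i j z) (single j k y) := by
  rcases eq_or_ne j k with rfl | hjk
  · exact hC.leibnizAt_single_diag hD hdiag hij z y
  have h := (leibnizAt_mul_left_iff (hC.leibnizAt_single_diag hD hdiag hij z y)
    (hC.leibnizAt_diag_single_one hD hdiag hjk y)).mp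
  simp only [single_mul_single_same, mul_one] at h
  exact h (hC.leibnizAt_single_single_one_of_ne htf hD hdiag hij hjk _)

lemma leibnizAt_diag_diag [Nontrivial n] (htf : ∀ m : M, m + m = 0 → m = 0)
    (hD : bm.JordanDerivableAtOrthogonal D) (hdiag : ∀ p, D (single p p (1 : R)) = 0)
    (hC : bm.MapsSingleToCorner D) (z y : R) :
    bm.LeibnizAt D (single i i z) (single i i y) := by
  obtain ⟨q, hq⟩ := exists_ne i
  have h := (leibnizAt_mul_left_iff (hC.leibnizAt_single_single_one_swap htf hD hdiag hq.symm z)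
    (hC.leibnizAt_single_one_diag hD hdiag hq y)).mpr
  simp only [single_mul_single_same, mul_one, one_mul] at h
  exact h (hC.leibnizAt_single_single_of_ne htf hD hdiag hq.symm z y)

lemma leibnizAt_diag_single [Nontrivial n] (htf : ∀ m : M, m + m = 0 → m = 0)
    (hD : bm.JordanDerivableAtOrthogonal D) (hdiag : ∀ p, D (single p p (1 : R)) = 0)
    (hC : bm.MapsSingleToCorner D) (z y : R) :
    bm.LeibnizAt D (single i i z) (single i k y) := by
  rcases eq_or_ne i k with rfl | hik
  · exact hC.leibnizAt_diag_diag htf hD hdiag z y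
  have h := (leibnizAt_mul_left_iff (hC.leibnizAt_diag_diag htf hD hdiag z y)
    (hC.leibnizAt_diag_single_one hD hdiag hik y)).mp
  simp only [single_mul_single_same, mul_one] at h
  exact h (hC.leibnizAt_diag_single_one hD hdiag hik _)

lemma leibnizAt_single_single [Nontrivial n] (htf : ∀ m : M, m + m = 0 → m = 0)
    (hD : bm.JordanDerivableAtOrthogonal D) (hdiag : ∀ p, D (single p p (1 : R)) = 0)
    (hC : bm.MapsSingleToCorner D) (i j k l : n) (z y : R) :
    bm.LeibnizAt D (single i j z) (single k l y) := by
  rcases eq_or_ne j k with rfl | hjk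
  · rcases eq_or_ne i j with rfl | hij
    · exact hC.leibnizAt_diag_single htf hD hdiag z y
    · exact hC.leibnizAt_single_single_of_ne htf hD hdiag hij z y
  · rw [LeibnizAt, single_mul_single_of_ne _ _ _ _ hjk, map_zero, hC.r_single_of_ne _ hjk,
      hC.single_l_of_ne _ _ hjk, add_zero]

end MapsSingleToCorner

lemma isDerivation_of_leibnizAt_single
    (h : ∀ (i j k l : n) (z y : R), bm.LeibnizAt D (single i j z) (single k l y)) :
    bm.IsDerivation D := by
  intro A B
  induction A using Matrix.induction_on' with
  | h_zero => simp [LeibnizAt, zero_l, zero_r]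
  | h_add A A' hA hA' =>
    simp only [LeibnizAt, add_mul, map_add, bm.add_l, bm.r_add] at hA hA' ⊢
    rw [hA, hA']
    abel
  | h_std_basis i j z =>
    induction B using Matrix.induction_on' with
    | h_zero => simp [LeibnizAt, l_zero, r_zero]
    | h_add B B' hB hB' =>
      simp only [LeibnizAt, mul_add, map_add, bm.l_add, bm.add_r] at hB hB' ⊢
      rw [hB, hB']
      abel
    | h_std_basis k l y => exact h i j k l z y

lemma isDerivation_of_map_single_diag_eq_zero [Nontrivial n]
    (hunit : ∀ m : M, bm.l 1 m = m ∧ bm.r m 1 = m) (htf : ∀ m : M, m + m = 0 → m = 0)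
    (hD : bm.JordanDerivableAtOrthogonal D) (hdiag : ∀ p, D (single p p (1 : R)) = 0) :
    bm.IsDerivation D :=
  isDerivation_of_leibnizAt_single
    ((mapsSingleToCorner hunit htf hD hdiag).leibnizAt_single_single htf hD hdiag)

end Matrix

end RingBimod

open RingBimod in
theorem stmt1 (R : Type*) [Ring R] (n : ℕ) (hn : 2 ≤ n)
    (M : Type*) [AddCommGroup M] (bm : RingBimod (Matrix (Fin n) (Fin n) R) M)
    (hunit : ∀ m : M, bm.l 1 m = m ∧ bm.r m 1 = m)
    (htf : ∀ m : M, m + m = 0 → m = 0)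
    (D : Matrix (Fin n) (Fin n) R → M)
    (hadd : ∀ A B, D (A + B) = D A + D B)
    (hD : ∀ A B, A * B = 0 → B * A = 0 →
      bm.r (D A) B + bm.l A (D B) + bm.r (D B) A + bm.l B (D A) = 0) :
    ∃ δ : Matrix (Fin n) (Fin n) R → M,
      (∀ A B, δ (A + B) = δ A + δ B) ∧
      (∀ A B, δ (A * B) = bm.r (δ A) B + bm.l A (δ B)) ∧
      (∀ A, D A = δ A + bm.l A (D 1)) ∧
      (∀ A, bm.l A (D 1) = bm.r (D 1) A) := by
  have : Nontrivial (Fin n) := Fin.nontrivial_iff_two_le.mpr hn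
  set D' : Matrix (Fin n) (Fin n) R →+ M := AddMonoidHom.mk' D hadd
  have hD' : bm.JordanDerivableAtOrthogonal D' := hD
  have hcen : ∀ A, bm.l A (D 1) = bm.r (D 1) A := commute_map_one hunit hD'
  set δ := D' - bm.actL (D 1)
  have hδ : bm.JordanDerivableAtOrthogonal δ := hD'.sub (jordanDerivableAtOrthogonal_actL hcen)
  have hδ1 : δ 1 = 0 := by simp [δ, D', (hunit _).1]
  obtain ⟨m, hm⟩ := exists_map_eq_innerDerivation_of_completeOrthogonalIdempotents hunit htf hδ
    hδ1 Matrix.completeOrthogonalIdempotents_single_one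
  have hder : bm.IsDerivation (δ - bm.innerDerivation m) :=
    isDerivation_of_map_single_diag_eq_zero hunit htf
      (hδ.sub (isDerivation_innerDerivation m).jordanDerivableAtOrthogonal) fun p => by simp [hm p]
  refine ⟨δ, map_add δ, fun A B => ?_, fun A => by simp [δ, D'], hcen⟩
  simpa only [sub_add_cancel, LeibnizAt] using hder.add (isDerivation_innerDerivation m) A B
end

section
/- Let R be a unital ring, n ≥ 2, and M a 2-torsion free unital Mₙ(R)-bimodule. If D : Mₙ(R) → M is an additive map such that AB = BA = 0 implies D(A)B + A D(B) + D(B)A + B D(A) - A D(1)B - B D(1)A = 0, then there exists a derivation δ : Mₙ(R) → M with D(A) = δ(A) + A·D(1) for all A ∈ Mₙ(R). -/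
open scoped RightActions

section Bimodule

variable {A M : Type*} [Ring A] [AddCommGroup M] [Module A M] [Module Aᵐᵒᵖ M]

def derivDefect (δ : A →+ M) : A →+ A →+ M :=
  AddMonoidHom.mk'
    (fun a => AddMonoidHom.mk' (fun b => δ (a * b) - δ a <• b - a • δ b) fun b b' => by
      simp only [mul_add, map_add, MulOpposite.op_add, add_smul, smul_add]
      abel)
    fun a a' => by
      ext b
      simp only [AddMonoidHom.mk'_apply, AddMonoidHom.add_apply, add_mul, map_add, add_smul,
        smul_add]
      abel

@[simp]
lemma derivDefect_apply (δ : A →+ M) (a b : A) :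
    derivDefect δ a b = δ (a * b) - δ a <• b - a • δ b := rfl

def innerDeriv (m : M) : A →+ M :=
  AddMonoidHom.mk' (fun a => a • m - m <• a) fun a b => by
    simp only [add_smul, MulOpposite.op_add]
    abel

@[simp]
lemma innerDeriv_apply (m : M) (a : A) : innerDeriv m a = a • m - m <• a := rfl

lemma op_smul_smul_comm [SMulCommClass A Aᵐᵒᵖ M] (a b : A) (m : M) :
    (a • m) <• b = a • (m <• b) :=
  (smul_comm a (MulOpposite.op b) m).symm

lemma derivDefect_sub_innerDeriv [SMulCommClass A Aᵐᵒᵖ M] (δ : A →+ M) (m : M) :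
    derivDefect (δ - innerDeriv m) = derivDefect δ := by
  ext a b
  simp only [derivDefect_apply, AddMonoidHom.sub_apply, innerDeriv_apply, smul_sub, mul_smul,
    op_smul_mul, op_smul_smul_comm]
  abel

lemma derivDefect_mul_left [SMulCommClass A Aᵐᵒᵖ M] (δ : A →+ M) (a b c : A) :
    derivDefect δ (a * b) c + derivDefect δ a b <• c
      = derivDefect δ a (b * c) + a • derivDefect δ b c := by
  simp only [derivDefect_apply, smul_sub, mul_smul, op_smul_mul, mul_assoc, op_smul_smul_comm]
  abel

def JordanDerivableOnOrthogonal (δ : A →+ M) : Prop :=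
  ∀ a b : A, a * b = 0 → b * a = 0 → derivDefect δ a b + derivDefect δ b a = 0

variable {δ : A →+ M}

lemma derivDefect_one_left (hδ1 : δ 1 = 0) (b : A) : derivDefect δ 1 b = 0 := by
  simp [hδ1]

lemma derivDefect_one_right (hδ1 : δ 1 = 0) (a : A) : derivDefect δ a 1 = 0 := by
  simp [hδ1]

lemma derivDefect_self_of_mul_self_eq_zero (hJ : JordanDerivableOnOrthogonal δ)
    (htf : ∀ m : M, m + m = 0 → m = 0) {X : A} (hX : X * X = 0) : derivDefect δ X X = 0 :=
  htf _ (hJ X X hX hX)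

lemma derivDefect_self_of_isIdempotentElem (hJ : JordanDerivableOnOrthogonal δ)
    (htf : ∀ m : M, m + m = 0 → m = 0) (hδ1 : δ 1 = 0) {P : A} (hP : IsIdempotentElem P) :
    derivDefect δ P P = 0 := by
  have h := hJ P (1 - P) (by rw [mul_sub, mul_one, hP.eq, sub_self])
    (by rw [sub_mul, one_mul, hP.eq, sub_self])
  simp only [map_sub, AddMonoidHom.sub_apply, derivDefect_one_left hδ1,
    derivDefect_one_right hδ1] at h
  apply htf
  linear_combination (norm := abel) -h

lemma apply_eq_op_smul_add_smul_of_isIdempotentElem (hJ : JordanDerivableOnOrthogonal δ)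
    (htf : ∀ m : M, m + m = 0 → m = 0) (hδ1 : δ 1 = 0) {P : A} (hP : IsIdempotentElem P) :
    δ P = δ P <• P + P • δ P := by
  have h := derivDefect_self_of_isIdempotentElem hJ htf hδ1 hP
  rw [derivDefect_apply, hP.eq, sub_sub, sub_eq_zero] at h
  exact h

lemma derivDefect_add_swap_of_mul_eq_self_of_mul_eq_zero (hJ : JordanDerivableOnOrthogonal δ)
    (htf : ∀ m : M, m + m = 0 → m = 0) (hδ1 : δ 1 = 0) {P X : A} (hP : IsIdempotentElem P)
    (hPX : P * X = X) (hXP : X * P = 0) : derivDefect δ P X + derivDefect δ X P = 0 := by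
  have hXX : X * X = 0 := by rw [← hPX, mul_assoc, ← mul_assoc X, hXP, zero_mul, mul_zero]
  have hplus := derivDefect_self_of_isIdempotentElem hJ htf hδ1 (P := P + X) (by
    simp only [IsIdempotentElem, add_mul, mul_add, hP.eq, hPX, hXP, hXX]
    abel)
  have hminus := derivDefect_self_of_isIdempotentElem hJ htf hδ1 (P := P - X) (by
    simp only [IsIdempotentElem, sub_mul, mul_sub, hP.eq, hPX, hXP, hXX]
    abel)
  simp only [map_add, map_sub, AddMonoidHom.add_apply, AddMonoidHom.sub_apply] at hplus hminus
  apply htf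
  linear_combination (norm := abel) hplus - hminus

lemma derivDefect_add_swap_of_mul_eq_zero_of_mul_eq_self (hJ : JordanDerivableOnOrthogonal δ)
    (htf : ∀ m : M, m + m = 0 → m = 0) (hδ1 : δ 1 = 0) {P X : A} (hP : IsIdempotentElem P)
    (hPX : P * X = 0) (hXP : X * P = X) : derivDefect δ P X + derivDefect δ X P = 0 := by
  have h := derivDefect_add_swap_of_mul_eq_self_of_mul_eq_zero hJ htf hδ1 hP.one_sub
    (by rw [sub_mul, one_mul, hPX, sub_zero]) (by rw [mul_sub, mul_one, hXP, sub_self])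
  simp only [map_sub, AddMonoidHom.sub_apply, derivDefect_one_left hδ1,
    derivDefect_one_right hδ1] at h
  linear_combination (norm := abel) -h

-- Subscripts name Peirce corners of `P`: `Aᵢⱼ = Pᵢ A Pⱼ` with `P₁ = P` and `P₂ = 1 - P`.
lemma derivDefect_add_swap_of_corner₁₂_of_corner₂₂ (hJ : JordanDerivableOnOrthogonal δ)
    (htf : ∀ m : M, m + m = 0 → m = 0) (hδ1 : δ 1 = 0) {P C W : A} (hP : IsIdempotentElem P)
    (hPC : P * C = C) (hCP : C * P = 0) (hPW : P * W = 0) (hWP : W * P = 0) :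
    derivDefect δ C W + derivDefect δ W C = 0 := by
  have hCC : C * C = 0 := by rw [← hPC, mul_assoc, ← mul_assoc C, hCP, zero_mul, mul_zero]
  have hWC : W * C = 0 := by rw [← hPC, ← mul_assoc, hWP, zero_mul]
  have hPCW : P * (C * W) = C * W := by rw [← mul_assoc, hPC]
  have hCWP : C * W * P = 0 := by rw [mul_assoc, hWP, mul_zero]
  have h₁ := hJ (P + C) (W - C * W)
    (by simp only [add_mul, mul_sub, hPW, hPCW, ← mul_assoc C C, hCC, zero_mul]; abel)
    (by simp only [sub_mul, mul_add, hWP, hWC, hCWP, mul_assoc C W C]; simp)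
  have h₂ := hJ (P - C) (W + C * W)
    (by simp only [sub_mul, mul_add, hPW, hPCW, ← mul_assoc C C, hCC, zero_mul]; abel)
    (by simp only [add_mul, mul_sub, hWP, hWC, hCWP, mul_assoc C W C]; simp)
  have hP_CW := derivDefect_add_swap_of_mul_eq_self_of_mul_eq_zero hJ htf hδ1 hP hPCW hCWP
  simp only [map_add, map_sub, AddMonoidHom.add_apply, AddMonoidHom.sub_apply] at h₁ h₂
  apply htf
  linear_combination (norm := abel) h₁ - h₂ + 2 • hP_CW

lemma derivDefect_add_swap_of_corner₂₂_of_corner₂₁ (hJ : JordanDerivableOnOrthogonal δ)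
    (htf : ∀ m : M, m + m = 0 → m = 0) (hδ1 : δ 1 = 0) {P W Y : A} (hP : IsIdempotentElem P)
    (hPY : P * Y = 0) (hYP : Y * P = Y) (hPW : P * W = 0) (hWP : W * P = 0) :
    derivDefect δ W Y + derivDefect δ Y W = 0 := by
  have hYY : Y * Y = 0 := by rw [← hYP, mul_assoc, ← mul_assoc P, hPY, zero_mul, mul_zero]
  have hYW : Y * W = 0 := by rw [← hYP, mul_assoc, hPW, mul_zero]
  have hPWY : P * (W * Y) = 0 := by rw [← mul_assoc, hPW, zero_mul]
  have hWYP : W * Y * P = W * Y := by rw [mul_assoc, hYP]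
  have h₁ := hJ (P + Y) (W - W * Y)
    (by simp only [add_mul, mul_sub, hPW, hPWY, ← mul_assoc Y W Y, hYW, zero_mul]; abel)
    (by simp only [sub_mul, mul_add, hWP, hWYP, mul_assoc W Y Y, hYY]; simp)
  have h₂ := hJ (P - Y) (W + W * Y)
    (by simp only [sub_mul, mul_add, hPW, hPWY, ← mul_assoc Y W Y, hYW, zero_mul]; abel)
    (by simp only [add_mul, mul_sub, hWP, hWYP, mul_assoc W Y Y, hYY]; simp)
  have hP_WY := derivDefect_add_swap_of_mul_eq_zero_of_mul_eq_self hJ htf hδ1 hP hPWY hWYP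
  simp only [map_add, map_sub, AddMonoidHom.add_apply, AddMonoidHom.sub_apply] at h₁ h₂
  apply htf
  linear_combination (norm := abel) h₁ - h₂ + 2 • hP_WY

lemma smul_apply_eq_and_apply_op_smul_eq_of_corner₁₁ [SMulCommClass A Aᵐᵒᵖ M]
    (hJ : JordanDerivableOnOrthogonal δ) (htf : ∀ m : M, m + m = 0 → m = 0) (hδ1 : δ 1 = 0)
    {P N : A} (hP : IsIdempotentElem P) (hδP : δ P = 0) (hPN : P * N = N) (hNP : N * P = N) :
    P • δ N = δ N ∧ δ N <• P = δ N := by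
  have hN : N * (1 - P) = 0 := by rw [mul_sub, mul_one, hNP, sub_self]
  have hN' : (1 - P) * N = 0 := by rw [sub_mul, one_mul, hPN, sub_self]
  have hδQ : δ (1 - P) = 0 := by rw [map_sub, hδ1, hδP, sub_zero]
  have h : δ N + δ N = δ N <• P + P • δ N := by
    have := hJ N (1 - P) hN hN'
    simp only [derivDefect_apply, hN, hN', hδQ, map_zero, smul_zero, MulOpposite.op_sub,
      MulOpposite.op_one, sub_smul, one_smul] at this
    linear_combination (norm := abel) -this
  have hl := congrArg (P • ·) h
  have hr := congrArg (· <• P) h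
  simp only [smul_add, smul_smul, ← MulOpposite.op_mul, hP.eq, op_smul_smul_comm] at hl hr
  have hPδN : P • δ N = δ N <• P := by linear_combination (norm := abel) hl - hr
  have hδN : δ N = δ N <• P :=
    sub_eq_zero.mp (htf _ (by linear_combination (norm := abel) h + hPδN))
  exact ⟨hPδN.trans hδN.symm, hδN.symm⟩

section CompleteOrthogonalIdempotents

variable [SMulCommClass A Aᵐᵒᵖ M] (hJ : JordanDerivableOnOrthogonal δ)
  (htf : ∀ m : M, m + m = 0 → m = 0) (hδ1 : δ 1 = 0) {I : Type*} [Fintype I]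
  {e : I → A} (he : CompleteOrthogonalIdempotents e)
include hJ htf hδ1 he

lemma CompleteOrthogonalIdempotents.smul_apply_op_smul_add_eq_zero (i j : I) :
    e j • (δ (e j) <• e i) + e j • (δ (e i) <• e i) = 0 := by
  have hsandwich t : e j • (δ (e t) <• e i)
      = e j • (δ (e t) <• (e t * e i)) + (e j * e t) • (δ (e t) <• e i) := by
    conv_lhs => rw [apply_eq_op_smul_add_smul_of_isIdempotentElem hJ htf hδ1 (he.idem t)]
    simp only [smul_add, op_smul_mul, mul_smul, op_smul_smul_comm]
  rcases eq_or_ne i j with rfl | hij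
  · have h := hsandwich i
    simp only [(he.idem i).eq] at h
    linear_combination (norm := abel) (-2 : ℤ) • h
  · have hsum : ∑ t, e j • (δ (e t) <• e i) = 0 := by
      rw [← Finset.smul_sum, ← Finset.smul_sum, ← map_sum, he.complete, hδ1, smul_zero,
        smul_zero]
    rwa [Finset.sum_eq_add_of_mem j i (Finset.mem_univ _) (Finset.mem_univ _) hij.symm
      fun t _ ht => by rw [hsandwich, he.ortho ht.2, he.ortho (Ne.symm ht.1)]; simp] at hsum

lemma CompleteOrthogonalIdempotents.exists_innerDeriv_eq :
    ∃ m : M, ∀ i, δ (e i) = innerDeriv m (e i) := by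
  refine ⟨∑ j, e j • δ (e j), fun i => ?_⟩
  have hleft : e i • ∑ j, e j • δ (e j) = e i • δ (e i) := by
    rw [Finset.smul_sum, Finset.sum_eq_single i (fun j _ hji => by
      rw [smul_smul, he.ortho hji.symm, zero_smul]) (by simp), smul_smul, (he.idem i).eq]
  have hright : (∑ j, e j • δ (e j)) <• e i = -(δ (e i) <• e i) := by
    have hterm j : (e j • δ (e j)) <• e i = -(e j • (δ (e i) <• e i)) := by
      rw [op_smul_smul_comm,
        eq_neg_of_add_eq_zero_left (he.smul_apply_op_smul_add_eq_zero hJ htf hδ1 i j)]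
    simp only [Finset.smul_sum, hterm, Finset.sum_neg_distrib, ← Finset.sum_smul, he.complete,
      one_smul]
  rw [innerDeriv_apply, hleft, hright, sub_neg_eq_add]
  conv_lhs => rw [apply_eq_op_smul_add_smul_of_isIdempotentElem hJ htf hδ1 (he.idem i)]
  abel

end CompleteOrthogonalIdempotents

end Bimodule

section MatrixRing

open Matrix

variable {ι R M : Type*} [Fintype ι] [DecidableEq ι] [Ring R] [AddCommGroup M]
  [Module (Matrix ι ι R) M] [Module (Matrix ι ι R)ᵐᵒᵖ M] {δ : Matrix ι ι R →+ M}

lemma Matrix.completeOrthogonalIdempotents_single_one_s2 :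
    CompleteOrthogonalIdempotents fun i : ι => single i i (1 : R) :=
  CompleteOrthogonalIdempotents.iff_ortho_complete.mpr
    ⟨fun _ _ hij => by simp [hij], sum_single_one⟩

lemma Matrix.isIdempotentElem_single_one_s2 (i : ι) : IsIdempotentElem (single i i (1 : R)) :=
  completeOrthogonalIdempotents_single_one_s2.idem i

variable [SMulCommClass (Matrix ι ι R) (Matrix ι ι R)ᵐᵒᵖ M]

section ApplySingleOneEqZero

variable (hJ : JordanDerivableOnOrthogonal δ) (htf : ∀ m : M, m + m = 0 → m = 0) (hδ1 : δ 1 = 0)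
  (hdiag : ∀ i, δ (single i i 1) = 0)
include hJ htf hδ1 hdiag

lemma single_one_smul_apply_single_one_of_ne {i j : ι} (hij : i ≠ j) :
    single i i (1 : R) • δ (single i j 1) = δ (single i j 1) ∧
      δ (single i j 1) <• single j j (1 : R) = δ (single i j 1) := by
  set m := δ (single i j 1)
  have hi : m = single i i (1 : R) • m + m <• single i i (1 : R) := by
    have h := derivDefect_add_swap_of_mul_eq_self_of_mul_eq_zero hJ htf hδ1
      (isIdempotentElem_single_one_s2 i) (X := single i j 1) (by simp) (by simp [hij.symm])
    simp [hdiag, hij.symm] at h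
    linear_combination (norm := abel) h
  have hj : m = single j j (1 : R) • m + m <• single j j (1 : R) := by
    have h := derivDefect_add_swap_of_mul_eq_zero_of_mul_eq_self hJ htf hδ1
      (isIdempotentElem_single_one_s2 j) (X := single i j 1) (by simp [hij.symm]) (by simp)
    simp [hdiag, hij.symm] at h
    linear_combination (norm := abel) h
  -- `hi` and `hj` put `m` in `eᵢᵢ M eⱼⱼ + eⱼⱼ M eᵢᵢ`; squaring `eᵢⱼ` to zero kills the second part.
  have hji : single j j (1 : R) • (m <• single i i (1 : R)) = 0 := by
    have h := derivDefect_self_of_mul_self_eq_zero hJ htf (X := single i j (1 : R))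
      (by simp [hij.symm])
    have h' := congrArg (fun t => single j j (1 : R) • (t <• single j i (1 : R))) h
    simpa [smul_sub, smul_neg, op_smul_smul_comm, smul_smul, ← MulOpposite.op_mul, hij.symm]
      using h'
  have hm : m = single i i (1 : R) • (m <• single j j (1 : R)) := by
    have hl := congrArg (single i i (1 : R) • ·) hj
    have hr := congrArg (· <• single i i (1 : R)) hj
    simp [op_smul_smul_comm, smul_smul, ← MulOpposite.op_mul, hij, hij.symm, hji] at hl hr
    conv_lhs => rw [hi]
    rw [hr, add_zero, hl]
  constructor <;> conv_lhs => rw [hm]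
  · rw [smul_smul, (isIdempotentElem_single_one_s2 i).eq, ← hm]
  · rw [op_smul_smul_comm, op_smul_op_smul, (isIdempotentElem_single_one_s2 j).eq, ← hm]

lemma single_one_smul_apply_single (i j : ι) (a : R) :
    single i i (1 : R) • δ (single i j a) = δ (single i j a) ∧
      δ (single i j a) <• single j j (1 : R) = δ (single i j a) := by
  have hdiag' k b : single k k (1 : R) • δ (single k k b) = δ (single k k b) ∧
      δ (single k k b) <• single k k (1 : R) = δ (single k k b) :=
    smul_apply_eq_and_apply_op_smul_eq_of_corner₁₁ hJ htf hδ1 (isIdempotentElem_single_one_s2 k)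
      (hdiag k) (by simp) (by simp)
  rcases eq_or_ne i j with rfl | hij
  · exact hdiag' i a
  obtain ⟨hC₁, hC₂⟩ := single_one_smul_apply_single_one_of_ne hJ htf hδ1 hdiag hij
  obtain ⟨hW₁, hW₂⟩ := hdiag' j a
  have hWC : derivDefect δ (single j j a) (single i j 1) = 0 := by
    rw [derivDefect_apply, ← hW₂, ← hC₁]
    simp [smul_smul, ← MulOpposite.op_mul, hij.symm]
  have hCW := derivDefect_add_swap_of_corner₁₂_of_corner₂₂ hJ htf hδ1
    (isIdempotentElem_single_one_s2 i) (C := single i j 1) (W := single j j a) (by simp)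
    (by simp [hij.symm]) (by simp [hij]) (by simp [hij.symm])
  rw [hWC, add_zero, derivDefect_apply, single_mul_single_same, one_mul, sub_sub,
    sub_eq_zero] at hCW
  rw [hCW]
  constructor
  · rw [smul_add, ← op_smul_smul_comm, hC₁, smul_smul, single_mul_single_same, one_mul]
  · rw [smul_add, op_smul_op_smul, op_smul_smul_comm, hW₂, single_mul_single_same, mul_one]

lemma derivDefect_single_single_of_inner_ne {j k : ι} (hjk : j ≠ k) (i l : ι) (a b : R) :
    derivDefect δ (single i j a) (single k l b) = 0 := by
  rw [derivDefect_apply, ← (single_one_smul_apply_single hJ htf hδ1 hdiag i j a).2,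
    ← (single_one_smul_apply_single hJ htf hδ1 hdiag k l b).1]
  simp [smul_smul, ← MulOpposite.op_mul, hjk]

lemma derivDefect_single_single_of_outer_ne {i l : ι} (hli : l ≠ i) (j : ι) (a b : R) :
    derivDefect δ (single i j a) (single j l b) = 0 := by
  have hswap : derivDefect δ (single j l b) (single i j a) = 0 :=
    derivDefect_single_single_of_inner_ne hJ htf hδ1 hdiag hli j j b a
  rcases eq_or_ne i j with rfl | hij
  · have h := derivDefect_add_swap_of_corner₂₂_of_corner₂₁ hJ htf hδ1
      (isIdempotentElem_single_one_s2 l) (W := single i i a) (Y := single i l b) (by simp [hli])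
      (by simp) (by simp [hli]) (by simp [hli.symm])
    rwa [hswap, add_zero] at h
  · have h := derivDefect_add_swap_of_corner₁₂_of_corner₂₂ hJ htf hδ1
      (isIdempotentElem_single_one_s2 i) (C := single i j a) (W := single j l b) (by simp)
      (by simp [hij.symm]) (by simp [hij]) (by simp [hli])
    rwa [hswap, add_zero] at h

lemma derivDefect_single_single_self_one (i j : ι) (a : R) :
    derivDefect δ (single i j a) (single j j 1) = 0 ∧
      derivDefect δ (single i i 1) (single i j a) = 0 := by
  obtain ⟨h₁, h₂⟩ := single_one_smul_apply_single hJ htf hδ1 hdiag i j a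
  simp [hdiag, h₁, h₂]

lemma derivDefect_single_single_mul {p q : ι} (hpq : p ≠ q) (a b : R) :
    derivDefect δ (single p q a) (single q p b)
      = derivDefect δ (single p q (a * b)) (single q p 1) := by
  have h := derivDefect_mul_left δ (single p q a) (single q q b) (single q p 1)
  rw [derivDefect_single_single_of_outer_ne hJ htf hδ1 hdiag hpq.symm,
    derivDefect_single_single_of_outer_ne hJ htf hδ1 hdiag hpq] at h
  simpa using h.symm

lemma derivDefect_single_single_one_add_swap {p q : ι} (hpq : p ≠ q) (a : R) :
    derivDefect δ (single p q a) (single q p 1) + derivDefect δ (single q p a) (single p q 1)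
      = 0 := by
  let X : Matrix ι ι R := single p p a + single p q a + single q p a + single q q a
  let Y : Matrix ι ι R := single p p 1 - single p q 1 - single q p 1 + single q q 1
  have hXY : X * Y = 0 := by simp [X, Y, add_mul, mul_add, mul_sub, hpq, hpq.symm]
  have hYX : Y * X = 0 := by
    simp [X, Y, add_mul, mul_add, sub_mul, hpq, hpq.symm]
    abel
  have h := hJ X Y hXY hYX
  simp only [X, Y, map_add, map_sub, AddMonoidHom.add_apply, AddMonoidHom.sub_apply] at h
  simp only [derivDefect_single_single_of_inner_ne hJ htf hδ1 hdiag,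
    derivDefect_single_single_of_outer_ne hJ htf hδ1 hdiag,
    derivDefect_single_single_self_one hJ htf hδ1 hdiag, ne_eq, hpq, hpq.symm,
    not_false_eq_true] at h
  rw [derivDefect_single_single_mul hJ htf hδ1 hdiag hpq 1 a,
    derivDefect_single_single_mul hJ htf hδ1 hdiag hpq.symm 1 a, one_mul] at h
  apply htf
  linear_combination (norm := abel) -h

lemma derivDefect_single_single_one_eq_zero {p q : ι} (hpq : p ≠ q) (a : R) :
    derivDefect δ (single p q a) (single q p 1) = 0 := by
  have hcorner i j : derivDefect δ (single i j a) (single j i 1) <• single i i (1 : R)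
      = derivDefect δ (single i j a) (single j i 1) := by
    simp only [derivDefect_apply, single_mul_single_same, mul_one, smul_sub, op_smul_op_smul,
      op_smul_smul_comm, (single_one_smul_apply_single hJ htf hδ1 hdiag i i a).2,
      (single_one_smul_apply_single hJ htf hδ1 hdiag j i 1).2]
  have h := congrArg (· <• single p p (1 : R))
    (derivDefect_single_single_one_add_swap hJ htf hδ1 hdiag hpq a)
  simp only [smul_add, smul_zero, hcorner p q] at h
  rwa [← hcorner q p, op_smul_op_smul, single_mul_single_of_ne (h := hpq.symm),
    MulOpposite.op_zero, zero_smul, add_zero] at h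

lemma derivDefect_single_single_eq_zero [Nontrivial ι] (i j k l : ι) (a b : R) :
    derivDefect δ (single i j a) (single k l b) = 0 := by
  rcases eq_or_ne j k with rfl | hjk
  swap
  · exact derivDefect_single_single_of_inner_ne hJ htf hδ1 hdiag hjk i l a b
  rcases eq_or_ne l i with rfl | hli
  swap
  · exact derivDefect_single_single_of_outer_ne hJ htf hδ1 hdiag hli j a b
  have hoff {p q : ι} (hpq : p ≠ q) (c d : R) :
      derivDefect δ (single p q c) (single q p d) = 0 := by
    rw [derivDefect_single_single_mul hJ htf hδ1 hdiag hpq,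
      derivDefect_single_single_one_eq_zero hJ htf hδ1 hdiag hpq]
  rcases eq_or_ne l j with rfl | hlj
  · obtain ⟨q, hq⟩ := exists_ne l
    have h := derivDefect_mul_left δ (single l q a) (single q l 1) (single l l b)
    simp only [single_mul_single_same, mul_one, hoff hq.symm,
      derivDefect_single_single_of_outer_ne hJ htf hδ1 hdiag hq.symm] at h
    simpa using h
  · exact hoff hlj a b

lemma derivDefect_eq_zero_of_apply_single_one [Nontrivial ι] : derivDefect δ = 0 :=
  ext_addMonoidHom fun i j => AddMonoidHom.ext fun a =>
    ext_addMonoidHom fun k l => AddMonoidHom.ext fun b =>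
      derivDefect_single_single_eq_zero hJ htf hδ1 hdiag i j k l a b

end ApplySingleOneEqZero

theorem derivDefect_eq_zero_of_jordanDerivableOnOrthogonal [Nontrivial ι]
    (hJ : JordanDerivableOnOrthogonal δ) (htf : ∀ m : M, m + m = 0 → m = 0) (hδ1 : δ 1 = 0) :
    derivDefect δ = 0 := by
  obtain ⟨m, hm⟩ := completeOrthogonalIdempotents_single_one_s2.exists_innerDeriv_eq hJ htf hδ1
  rw [← derivDefect_sub_innerDeriv δ m]
  refine derivDefect_eq_zero_of_apply_single_one ?_ htf (by simp [hδ1]) fun i => by simp [hm]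
  simpa only [JordanDerivableOnOrthogonal, derivDefect_sub_innerDeriv] using hJ

end MatrixRing

namespace RingBimod

variable {A M : Type*} [Ring A] [AddCommGroup M]

abbrev leftModule (bm : RingBimod A M) (one_l : ∀ m, bm.l 1 m = m) : Module A M where
  smul := bm.l
  one_smul := one_l
  mul_smul := bm.mul_l
  smul_zero a := by
    show bm.l a 0 = 0
    simpa using bm.l_add a 0 0
  smul_add := bm.l_add
  add_smul := bm.add_l
  zero_smul m := by
    show bm.l 0 m = 0
    simpa using bm.add_l 0 0 m

abbrev rightModule (bm : RingBimod A M) (r_one : ∀ m, bm.r m 1 = m) : Module Aᵐᵒᵖ M where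
  smul a m := bm.r m a.unop
  one_smul := r_one
  mul_smul a b m := bm.r_mul m b.unop a.unop
  smul_zero a := by
    show bm.r 0 a.unop = 0
    simpa using bm.r_add 0 0 a.unop
  smul_add a m m' := bm.r_add m m' a.unop
  add_smul a b m := bm.add_r m a.unop b.unop
  zero_smul m := by
    show bm.r m 0 = 0
    simpa using bm.add_r m 0 0

end RingBimod

theorem stmt2 (R : Type*) [Ring R] (n : ℕ) (hn : 2 ≤ n)
    (M : Type*) [AddCommGroup M] (bm : RingBimod (Matrix (Fin n) (Fin n) R) M)
    (hunit : ∀ m : M, bm.l 1 m = m ∧ bm.r m 1 = m)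
    (htf : ∀ m : M, m + m = 0 → m = 0)
    (D : Matrix (Fin n) (Fin n) R → M)
    (hadd : ∀ A B, D (A + B) = D A + D B)
    (hD : ∀ A B, A * B = 0 → B * A = 0 →
      bm.r (D A) B + bm.l A (D B) + bm.r (D B) A + bm.l B (D A)
        - bm.l A (bm.r (D 1) B) - bm.l B (bm.r (D 1) A) = 0) :
    ∃ δ : Matrix (Fin n) (Fin n) R → M,
      (∀ A B, δ (A + B) = δ A + δ B) ∧
      (∀ A B, δ (A * B) = bm.r (δ A) B + bm.l A (δ B)) ∧
      (∀ A, D A = δ A + bm.l A (D 1)) := by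
  let := bm.leftModule fun m => (hunit m).1
  let := bm.rightModule fun m => (hunit m).2
  have : SMulCommClass (Matrix (Fin n) (Fin n) R) (Matrix (Fin n) (Fin n) R)ᵐᵒᵖ M :=
    ⟨fun a b m => bm.l_r a m b.unop⟩
  have : Nontrivial (Fin n) := Fin.nontrivial_iff_two_le.mpr hn
  let δ : Matrix (Fin n) (Fin n) R →+ M :=
    AddMonoidHom.mk' (fun A => D A - A • D 1) fun A B => by
      rw [hadd, add_smul]
      abel
  have hJ : JordanDerivableOnOrthogonal δ := fun A B hAB hBA => by
    have h : D A <• B + A • D B + D B <• A + B • D A - A • (D 1 <• B) - B • (D 1 <• A) = 0 :=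
      hD A B hAB hBA
    rw [derivDefect_apply, derivDefect_apply, hAB, hBA, map_zero]
    simp only [δ, AddMonoidHom.mk'_apply, smul_sub, smul_smul, hAB, hBA, zero_smul,
      op_smul_smul_comm]
    linear_combination (norm := abel) -h
  have hδ := derivDefect_eq_zero_of_jordanDerivableOnOrthogonal hJ htf (by simp [δ])
  refine ⟨δ, map_add δ, fun A B => ?_, fun A => (sub_add_cancel _ _).symm⟩
  have h : derivDefect δ A B = 0 := by rw [hδ]; rfl
  rwa [derivDefect_apply, sub_sub, sub_eq_zero] at h
end

section
/- Let R be a unital ring, n ≥ 2, M a 2-torsion free unital Mₙ(R)-bimodule, and Δ : Mₙ(R) → M an additive map satisfying: AB = BA = 0 implies Δ(A)B + AΔ(B) + Δ(B)A + BΔ(A) = 0. Set E = E₁₁ and F = 1 - E₁₁, and suppose EΔ(E)F = FΔ(E)E = 0. Then for every A ∈ Mₙ(R), Δ(EAE) = EΔ(EAE)E and Δ(FAF) = FΔ(FAF)F. -/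
open MulOpposite
open scoped RightActions

namespace RingBimod

variable {A M : Type*} [Ring A] [AddCommGroup M] (bm : RingBimod A M)

abbrev toModule (h : ∀ m, bm.l 1 m = m) : Module A M where
  smul := bm.l
  one_smul := h
  mul_smul := bm.mul_l
  smul_zero a := (AddMonoidHom.mk' (bm.l a) (bm.l_add a)).map_zero
  smul_add := bm.l_add
  add_smul := bm.add_l
  zero_smul m := (AddMonoidHom.mk' (bm.l · m) (bm.add_l · · m)).map_zero

abbrev toModuleMop (h : ∀ m, bm.r m 1 = m) : Module Aᵐᵒᵖ M where
  smul a m := bm.r m a.unop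
  one_smul := h
  mul_smul a b m := bm.r_mul m b.unop a.unop
  smul_zero a := (AddMonoidHom.mk' (bm.r · a.unop) (bm.r_add · · a.unop)).map_zero
  smul_add a m₁ m₂ := bm.r_add m₁ m₂ a.unop
  add_smul a b m := bm.add_r m a.unop b.unop
  zero_smul m := (AddMonoidHom.mk' (bm.r m) (bm.add_r m)).map_zero

end RingBimod

section Bimodule

variable {A M : Type*} [Ring A] [AddCommGroup M] [Module A M] [Module Aᵐᵒᵖ M]

def IsJordanDerivableAtZero (Δ : A → M) : Prop :=
  ∀ a b : A, a * b = 0 → b * a = 0 → Δ a <• b + a • Δ b + Δ b <• a + b • Δ a = 0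

lemma eq_corner_of_corners_eq_zero {e : A} {m : M} (h₁ : e • (m <• (1 - e)) = 0)
    (h₂ : (1 - e) • (m <• e) = 0) (h₃ : (1 - e) • (m <• (1 - e)) = 0) :
    m = e • (m <• e) :=
  calc m = e • (m <• e) + e • (m <• (1 - e)) + (1 - e) • (m <• e)
          + (1 - e) • (m <• (1 - e)) := by
        simp only [op_sub, op_one, sub_smul, smul_sub, one_smul]
        abel
    _ = e • (m <• e) := by rw [h₁, h₂, h₃, add_zero, add_zero, add_zero]

variable [SMulCommClass A Aᵐᵒᵖ M]

lemma smul_op_smul_comm (a b : A) (m : M) : (a • m) <• b = a • (m <• b) :=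
  (smul_comm a (op b) m).symm

namespace IsJordanDerivableAtZero

variable {Δ : A → M} (hΔ : IsJordanDerivableAtZero Δ) {e : A} (he : IsIdempotentElem e)
include hΔ he

lemma corner_map_add_corner_map_one_sub :
    e • (Δ e <• (1 - e)) + e • (Δ (1 - e) <• (1 - e)) = 0 := by
  have h := congrArg (fun m => e • (m <• (1 - e)))
    (hΔ e (1 - e) he.mul_one_sub_self he.one_sub_mul_self)
  simpa only [smul_add, smul_zero, ← op_mul, smul_op_smul_comm, smul_smul,
    he.one_sub.eq, he.eq, he.mul_one_sub_self, zero_smul, op_zero, add_zero] using h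

lemma map_eq_corner (htf : ∀ m : M, m + m = 0 → m = 0)
    (h₁ : e • (Δ (1 - e) <• (1 - e)) = 0) (h₂ : (1 - e) • (Δ (1 - e) <• e) = 0)
    {x : A} (hl : e * x = x) (hr : x * e = x) :
    Δ x = e • (Δ x <• e) := by
  have hxf : x * (1 - e) = 0 := by rw [mul_sub, mul_one, hr, sub_self]
  have hfx : (1 - e) * x = 0 := by rw [sub_mul, one_mul, hl, sub_self]
  have hx₁ : x • (Δ (1 - e) <• (1 - e)) = 0 := by rw [← hr, mul_smul, h₁, smul_zero]
  have hx₂ : (1 - e) • (Δ (1 - e) <• x) = 0 := by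
    rw [← hl, op_mul, mul_smul, smul_comm, h₂, smul_zero]
  have h := hΔ x (1 - e) hxf hfx
  apply eq_corner_of_corners_eq_zero
  · simpa only [smul_add, smul_zero, ← op_mul, smul_op_smul_comm, smul_smul, hl, hx₁,
      he.one_sub.eq, hxf, he.mul_one_sub_self, zero_smul, op_zero, add_zero] using
      congrArg (fun m => e • (m <• (1 - e))) h
  · simpa only [smul_add, smul_zero, ← op_mul, smul_op_smul_comm, smul_smul, hr, hx₂,
      he.one_sub.eq, hfx, he.one_sub_mul_self, zero_smul, op_zero, zero_add] using
      congrArg (fun m => (1 - e) • (m <• e)) h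
  · refine htf _ ?_
    simpa only [smul_add, smul_zero, ← op_mul, smul_op_smul_comm, smul_smul,
      he.one_sub.eq, hxf, hfx, zero_smul, op_zero, add_zero] using
      congrArg (fun m => (1 - e) • (m <• (1 - e))) h

theorem map_corner_eq_corner (htf : ∀ m : M, m + m = 0 → m = 0)
    (h₁ : e • (Δ e <• (1 - e)) = 0) (h₂ : (1 - e) • (Δ e <• e) = 0) (y : A) :
    Δ (e * y * e) = e • (Δ (e * y * e) <• e) ∧
      Δ ((1 - e) * y * (1 - e)) = (1 - e) • (Δ ((1 - e) * y * (1 - e)) <• (1 - e)) := by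
  have hf₁ : e • (Δ (1 - e) <• (1 - e)) = 0 := by
    simpa only [h₁, zero_add] using hΔ.corner_map_add_corner_map_one_sub he
  have hf₂ : (1 - e) • (Δ (1 - e) <• e) = 0 := by
    simpa only [sub_sub_cancel, h₂, add_zero] using
      hΔ.corner_map_add_corner_map_one_sub he.one_sub
  constructor
  · exact hΔ.map_eq_corner he htf hf₁ hf₂ (by rw [← mul_assoc, ← mul_assoc, he.eq])
      (by rw [mul_assoc, he.eq])
  · refine hΔ.map_eq_corner he.one_sub htf (by rwa [sub_sub_cancel]) (by rwa [sub_sub_cancel])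
      (by rw [← mul_assoc, ← mul_assoc, he.one_sub.eq]) (by rw [mul_assoc, he.one_sub.eq])

end IsJordanDerivableAtZero

end Bimodule

theorem stmt4 (R : Type*) [Ring R] (n : ℕ) (hn : 2 ≤ n)
    (M : Type*) [AddCommGroup M] (bm : RingBimod (Matrix (Fin n) (Fin n) R) M)
    (hunit : ∀ m : M, bm.l 1 m = m ∧ bm.r m 1 = m)
    (htf : ∀ m : M, m + m = 0 → m = 0)
    (Δ : Matrix (Fin n) (Fin n) R → M)
    (hΔ : ∀ A B, A * B = 0 → B * A = 0 →
      bm.r (Δ A) B + bm.l A (Δ B) + bm.r (Δ B) A + bm.l B (Δ A) = 0)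
    (E F : Matrix (Fin n) (Fin n) R)
    (hE : E = Matrix.single ⟨0, by omega⟩ ⟨0, by omega⟩ (1 : R))
    (hF : F = 1 - E)
    (hEF1 : bm.l E (bm.r (Δ E) F) = 0) (hEF2 : bm.l F (bm.r (Δ E) E) = 0) :
    ∀ A : Matrix (Fin n) (Fin n) R,
      Δ (E * A * E) = bm.l E (bm.r (Δ (E * A * E)) E) ∧
      Δ (F * A * F) = bm.l F (bm.r (Δ (F * A * F)) F) := by
  let := bm.toModule fun m => (hunit m).1
  let := bm.toModuleMop fun m => (hunit m).2
  have : SMulCommClass (Matrix (Fin n) (Fin n) R) (Matrix (Fin n) (Fin n) R)ᵐᵒᵖ M :=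
    ⟨fun a b m => bm.l_r a m b.unop⟩
  have hE : IsIdempotentElem E := by
    rw [hE, IsIdempotentElem, Matrix.single_mul_single_same, one_mul]
  subst hF
  exact IsJordanDerivableAtZero.map_corner_eq_corner hΔ hE htf hEF1 hEF2
end

section
/- Let A be a unital ring such that for every 2-torsion free A-bimodule M, every Jordan derivation A → M is a derivation. Then for every 2-torsion free A-bimodule M, every generalized Jordan derivation D : A → M is a generalized derivation. -/
universe u

theorem stmt10 (A : Type u) [Ring A]
    (h : ∀ (M : Type u) [AddCommGroup M] (bm : RingBimod A M),
      (∀ m : M, m + m = 0 → m = 0) →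
      ∀ D : A → M, (∀ a b, D (a + b) = D a + D b) →
      (∀ a b, D (a * b + b * a)
          = bm.r (D a) b + bm.l a (D b) + bm.r (D b) a + bm.l b (D a)) →
      ∀ a b, D (a * b) = bm.r (D a) b + bm.l a (D b)) :
    ∀ (M : Type u) [AddCommGroup M] (bm : RingBimod A M),
      (∀ m : M, m + m = 0 → m = 0) →
      ∀ D : A → M, (∀ a b, D (a + b) = D a + D b) →
      (∀ a b, D (a * b + b * a)
          = bm.r (D a) b + bm.l a (D b) + bm.r (D b) a + bm.l b (D a)
            - bm.l a (bm.r (D 1) b) - bm.l b (bm.r (D 1) a)) →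
      ∀ a b, D (a * b) = bm.r (D a) b + bm.l a (D b) - bm.l a (bm.r (D 1) b) := by
  intro M _ bm tf D Dadd Djord
  have lsub : ∀ a m₁ m₂, bm.l a (m₁ - m₂) = bm.l a m₁ - bm.l a m₂ := by
    intro a m₁ m₂
    simpa using (AddMonoidHom.mk' (bm.l a) (bm.l_add a)).map_sub m₁ m₂
  have rsub : ∀ m₁ m₂ a, bm.r (m₁ - m₂) a = bm.r m₁ a - bm.r m₂ a := by
    intro m₁ m₂ a
    simpa using (AddMonoidHom.mk' (fun m => bm.r m a) (fun x y => bm.r_add x y a)).map_sub m₁ m₂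
  set Δ : A → M := fun a => D a - bm.l a (D 1) with hΔ
  have Δadd : ∀ a b, Δ (a + b) = Δ a + Δ b := by
    intro a b
    simp only [hΔ, Dadd, bm.add_l]
    abel
  have Δjord : ∀ a b, Δ (a * b + b * a)
      = bm.r (Δ a) b + bm.l a (Δ b) + bm.r (Δ b) a + bm.l b (Δ a) := by
    intro a b
    simp only [hΔ, Djord, rsub, lsub, bm.add_l, ← bm.mul_l, bm.l_r]
    abel
  intro a b
  have key := h M bm tf Δ Δadd Δjord a b
  simp only [hΔ, rsub, lsub, bm.mul_l, bm.l_r] at key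
  have : D (a * b) - bm.l a (bm.l b (D 1))
      = bm.r (D a) b - bm.r (bm.l a (D 1)) b + (bm.l a (D b) - bm.l a (bm.l b (D 1))) := key
  rw [← bm.l_r] at this
  calc D (a * b) = (D (a * b) - bm.l a (bm.l b (D 1))) + bm.l a (bm.l b (D 1)) := by abel
    _ = bm.r (D a) b + bm.l a (D b) - bm.l a (bm.r (D 1) b) := by rw [this]; abel
end
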